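/- Let $I\subseteq\{0,\ldots,d\}$ with $0\in I$. Then $\Diamond^d(\Gamma^d_I)=\Diamond^d(\Gamma^d_{I\setminus\{0\}})\cup\Diamond^d(\Gamma^d_0)$, the intersection is $\Diamond^d(\Gamma^d_{I\setminus\{0\}})\cap\Diamond^d(\Gamma^d_0)=\pi(\Diamond^{d-1}(\Gamma^{d-1}_{(I\setminus\{0\})-1}))$, and $\Diamond^d(\Gamma^d_0)$ is an induced subcomplex of $\Diamond^d(\Gamma^d_I)$. -/

import Mathlib

namespace Paper

/-- Ambient vertex type in dimension `d`: original vertices `0,…,d+1` (left)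
and new vertices `v_0,…,v_d` (right). -/
abbrev V (d : ℕ) := Sum (Fin (d+2)) (Fin (d+1))

def origV (d m : ℕ) : V d := Sum.inl ⟨m % (d+2), Nat.mod_lt m (by omega)⟩
def newV (d m : ℕ) : V d := Sum.inr ⟨m % (d+1), Nat.mod_lt m (by omega)⟩

variable {W : Type*} [DecidableEq W] {W' : Type*} [DecidableEq W']

def IsComplex (Δ : Set (Finset W)) : Prop := ∀ F ∈ Δ, ∀ G, G ⊆ F → G ∈ Δ

def isFacet (Δ : Set (Finset W)) (F : Finset W) : Prop :=
  F ∈ Δ ∧ ∀ G ∈ Δ, F ⊆ G → G = F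

def simplexOn (A : Finset W) : Set (Finset W) := {F | F ⊆ A}

def bdrySimplex (A : Finset W) : Set (Finset W) := {F | F ⊂ A}

def joinC (Δ Γ : Set (Finset W)) : Set (Finset W) := {s | ∃ a ∈ Δ, ∃ b ∈ Γ, s = a ∪ b}

def lkC (Δ : Set (Finset W)) (F : Finset W) : Set (Finset W) :=
  {G | Disjoint F G ∧ F ∪ G ∈ Δ}

def delFace (Δ : Set (Finset W)) (F : Finset W) : Set (Finset W) := {G ∈ Δ | ¬ F ⊆ G}

/-- Stellar subdivision at `F` with new vertex `v`. -/
def sdC (v : W) (F : Finset W) (Δ : Set (Finset W)) : Set (Finset W) :=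
  delFace Δ F ∪ joinC (simplexOn {v}) (joinC (bdrySimplex F) (lkC Δ F))

/-- Deletion of a subcomplex: the complex generated by the facets of `Δ`
that are not facets of `Γ`. -/
def delSub (Δ Γ : Set (Finset W)) : Set (Finset W) :=
  {G | ∃ F, isFacet Δ F ∧ ¬ isFacet Γ F ∧ G ⊆ F}

def IsInduced (Γ Δ : Set (Finset W)) : Prop :=
  Γ ⊆ Δ ∧ ∀ F ∈ Δ, (∀ v ∈ F, ({v} : Finset W) ∈ Γ) → F ∈ Γ

/-- Simplicial isomorphism (via a permutation of the ambient vertex set). -/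
def IsoC (Δ Γ : Set (Finset W)) : Prop :=
  ∃ e : Equiv.Perm W, ∀ F : Finset W, F ∈ Δ ↔ F.image (⇑e) ∈ Γ

def mapC (f : W → W') (Δ : Set (Finset W)) : Set (Finset W') := {F | ∃ G ∈ Δ, F = G.image f}

/-- Number of faces of cardinality `i` (i.e. dimension `i-1`). -/
noncomputable def fnum (Δ : Set (Finset W)) (i : ℕ) : ℕ := {F | F ∈ Δ ∧ F.card = i}.ncard

/-- `h`-numbers of a `d`-dimensional complex. -/
noncomputable def hnum (d : ℕ) (Δ : Set (Finset W)) (j : ℕ) : ℤ :=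
  ∑ i ∈ Finset.range (j+1),
    (-1 : ℤ)^(j-i) * ((d+1-i).choose (d+1-j) : ℤ) * (fnum Δ i : ℤ)

/-- `R` is the restriction face of the `i`-th facet of the ordering `L`. -/
def IsRestriction (L : List (Finset W)) (i : ℕ) (R : Finset W) : Prop :=
  R ⊆ L.getD i ∅ ∧ (∀ j < i, ¬ R ⊆ L.getD j ∅) ∧
    ∀ G ⊆ L.getD i ∅, (∀ j < i, ¬ G ⊆ L.getD j ∅) → R ⊆ G

def IsShelling (Δ : Set (Finset W)) (L : List (Finset W)) : Prop :=
  L.Nodup ∧ (∀ F, F ∈ L ↔ isFacet Δ F) ∧ ∀ i < L.length, ∃ R, IsRestriction L i R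

def Shellable (Δ : Set (Finset W)) : Prop := ∃ L, IsShelling Δ L

def IsRelRestriction (Sg : Set (Finset W)) (L : List (Finset W)) (i : ℕ) (R : Finset W) : Prop :=
  R ⊆ L.getD i ∅ ∧ R ∉ Sg ∧ (∀ j < i, ¬ R ⊆ L.getD j ∅) ∧
    ∀ G ⊆ L.getD i ∅, G ∉ Sg → (∀ j < i, ¬ G ⊆ L.getD j ∅) → R ⊆ G

/-- Shelling of the relative complex `(Δ, Sg)`. -/
def IsRelShelling (Δ Sg : Set (Finset W)) (L : List (Finset W)) : Prop :=
  L.Nodup ∧ (∀ F, F ∈ L ↔ (isFacet Δ F ∧ F ∉ Sg)) ∧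
    ∀ i < L.length, ∃ R, IsRelRestriction Sg L i R

/-- The facet of the `(d+1)`-simplex on `{0,…,d+1}` omitting vertex `i`. -/
def Gface (d i : ℕ) : Finset (V d) :=
  ((Finset.range (d+2)).filter (fun j => j ≠ i)).image (origV d)

def GammaC (d i : ℕ) : Set (Finset (V d)) := simplexOn (Gface d i)

def GammaU (d : ℕ) (I : Finset ℕ) : Set (Finset (V d)) := {F | ∃ i ∈ I, F ⊆ Gface d i}

/-- The face `F_i = {i+1,…,d+1}` subdivided by the diamond operation. -/
def Fsub (d i : ℕ) : Finset (V d) := (Finset.Ioc i (d+1)).image (origV d)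

/-- The diamond operation: successive stellar subdivisions at `F_0, F_1, …, F_d`
with new vertices `v_0,…,v_d` (subdivision at a non-face has no effect). -/
def Diam (d : ℕ) (Δ : Set (Finset (V d))) : Set (Finset (V d)) :=
  (List.range (d+1)).foldl (fun Γ i => sdC (newV d i) (Fsub d i) Γ) Δ

def DiamU (d : ℕ) (I : Finset ℕ) : Set (Finset (V d)) := Diam d (GammaU d I)

/-- Boundary complex of the cross-polytope on the vertex pairs `{j, v_j}`, `j ∈ S`. -/
def crossN (d : ℕ) (S : Finset ℕ) : Set (Finset (V d)) :=
  {F | (∀ x ∈ F, ∃ j ∈ S, x = origV d j ∨ x = newV d j) ∧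
       ∀ j ∈ S, ¬ (origV d j ∈ F ∧ newV d j ∈ F)}

/-- Boundary complex: generated by the faces of cardinality `n` contained in
exactly one facet. -/
def bdryC (n : ℕ) (Δ : Set (Finset W)) : Set (Finset W) :=
  {G | ∃ F, G ⊆ F ∧ F ∈ Δ ∧ F.card = n ∧ ∃! H, isFacet Δ H ∧ F ⊆ H}

/-- Positions in `P` at which `G` differs from the reference facet `F0`. -/
def diffSet (d : ℕ) (P : Finset ℕ) (F0 G : Finset (V d)) : Finset ℕ :=
  P.filter (fun j => decide (origV d j ∈ G) ≠ decide (origV d j ∈ F0))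

/-- Degree lexicographic comparison of characteristic (difference) sets. -/
def dlexLT (D D' : Finset ℕ) : Prop :=
  D.card < D'.card ∨
    (D.card = D'.card ∧ ∃ m, m ∉ D ∧ m ∈ D' ∧ ∀ j < m, (j ∈ D ↔ j ∈ D'))

/-- `L` lists the facets of `Δ` in degree lexicographic order w.r.t. `F0`. -/
def IsDegLexOrder (d : ℕ) (P : Finset ℕ) (Δ : Set (Finset (V d)))
    (F0 : Finset (V d)) (L : List (Finset (V d))) : Prop :=
  L.Nodup ∧ (∀ F, F ∈ L ↔ isFacet Δ F) ∧
    L.Pairwise (fun G G' => dlexLT (diffSet d P F0 G) (diffSet d P F0 G'))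

/-- Vertices of `F` sitting at the positions in `D`. -/
def posVerts (d : ℕ) (F : Finset (V d)) (D : Finset ℕ) : Finset (V d) :=
  F.filter (fun x => ∃ j ∈ D, x = origV d j ∨ x = newV d j)

def IsoN (Δ Γ : Set (Finset ℕ)) : Prop :=
  ∃ e : Equiv.Perm ℕ, ∀ F : Finset ℕ, F ∈ Δ ↔ F.image (⇑e) ∈ Γ

def StellarMove (Δ Γ : Set (Finset ℕ)) : Prop :=
  ∃ (F : Finset ℕ) (v : ℕ), F ∈ Δ ∧ F ≠ ∅ ∧ (∀ G ∈ Δ, v ∉ G) ∧ Γ = sdC v F Δ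

/-- PL homeomorphism of simplicial complexes, encoded via Alexander's theorem as
stellar equivalence: the equivalence relation generated by stellar subdivisions
(and their inverses, the welds) together with simplicial isomorphisms. -/
def PLHomeo (Δ Γ : Set (Finset ℕ)) : Prop :=
  Relation.EqvGen (fun A B => StellarMove A B ∨ IsoN A B) Δ Γ

def encV (d : ℕ) : V d → ℕ := Sum.elim (fun j => 2 * j.val) (fun j => 2 * j.val + 1)

def toN (d : ℕ) (Δ : Set (Finset (V d))) : Set (Finset ℕ) := mapC (encV d) Δ

def ballN (c : ℕ) : Set (Finset ℕ) := {F | F ⊆ Finset.range c}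

def sphereN (c : ℕ) : Set (Finset ℕ) := {F | F ⊂ Finset.range (c+1)}

/-- `Δ` is a combinatorial ball of dimension `c-1` (a `(c-1)`-simplex has `c` vertices). -/
def IsCombBall (d c : ℕ) (Δ : Set (Finset (V d))) : Prop := PLHomeo (toN d Δ) (ballN c)

/-- `Δ` is a combinatorial sphere of dimension `c-1`. -/
def IsCombSphere (d c : ℕ) (Δ : Set (Finset (V d))) : Prop := PLHomeo (toN d Δ) (sphereN c)

def ConnC (Δ : Set (Finset W)) : Prop :=
  ∀ u v : W, ({u} : Finset W) ∈ Δ → ({v} : Finset W) ∈ Δ →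
    Relation.ReflTransGen (fun a b => ({a, b} : Finset W) ∈ Δ) u v

/-- Combinatorial `d`-manifold (possibly with boundary): connected, pure, and all
links of nonempty faces are combinatorial balls or spheres of dimension `d - |F|`. -/
def IsCombManifold (d : ℕ) (Δ : Set (Finset (V d))) : Prop :=
  IsComplex Δ ∧ (∅ : Finset (V d)) ∈ Δ ∧ ConnC Δ ∧
  (∀ F ∈ Δ, ∃ G, isFacet Δ G ∧ F ⊆ G ∧ G.card = d+1) ∧
  ∀ F ∈ Δ, F ≠ (∅ : Finset (V d)) →
    (IsCombBall d (d+1-F.card) (lkC Δ F) ∨ IsCombSphere d (d+1-F.card) (lkC Δ F))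

def liftV (d : ℕ) : V d → V (d+1) := Sum.map Fin.castSucc Fin.castSucc

/-- The relabeling `π : i ↦ i+1`, `v_i ↦ v_{i+1}`. -/
def piV (d : ℕ) : V d → V (d+1) := Sum.map Fin.succ Fin.succ

/-- The relabeling `ρ : i ↦ i-1`, `v_i ↦ v_{i-1}` (indices mod `d+1`). -/
def rhoV (d : ℕ) : V d → V d := fun x =>
  match x with
  | Sum.inl j => origV d ((j.val + d) % (d+1))
  | Sum.inr j => newV d ((j.val + d) % (d+1))

/-- `ψ` swaps the vertices `d` and `v_d`. -/
def psiV (d : ℕ) : V d → V d := fun x => Equiv.swap (origV d d) (newV d d) x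

def sigmaV (d : ℕ) : V d → V d := psiV d ∘ rhoV d

/-- `Δ` is (isomorphic to) the boundary complex of the `(d+1)`-dimensional
cross-polytope. -/
def IsCrossBdry (d : ℕ) (Δ : Set (Finset W)) : Prop :=
  ∃ f : Fin (d+1) × Bool → W, Function.Injective f ∧
    Δ = {F | (∀ v ∈ F, ∃ p, v = f p) ∧
             ∀ j : Fin (d+1), ¬ (f (j, true) ∈ F ∧ f (j, false) ∈ F)}

/-- `Sg` is a connected sum of `Δ` and `Γ`: they meet exactly in the full simplex
on a common facet `F`, which is removed. -/
def IsConnSum (Δ Γ Sg : Set (Finset W)) : Prop :=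
  ∃ F : Finset W, isFacet Δ F ∧ isFacet Γ F ∧ Δ ∩ Γ = simplexOn F ∧ Sg = (Δ ∪ Γ) \ {F}

/-- Connected sum of `m+1` copies of the boundary of the `(d+1)`-cross-polytope. -/
def IsCrossStacked (d : ℕ) : ℕ → Set (Finset W) → Prop
  | 0, Δ => IsCrossBdry d Δ
  | (m+1), Δ => ∃ A B : Set (Finset W), IsCrossStacked d m A ∧ IsCrossBdry d B ∧ IsConnSum A B Δ

/-- The initial facet of the block `Diam(Γ_{iℓ})` (for block index `ℓ ≥ 1`;
block `0` uses the facet `G0` meeting the boundary). -/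
def initFacet (d i1 iℓ : ℕ) (G0 : Finset (V d)) (ℓ : ℕ) : Finset (V d) :=
  if ℓ = 0 then G0
  else ((Finset.range iℓ).image (origV d)) ∪ {newV d iℓ} ∪
       ((Finset.Ioo iℓ (max i1 iℓ)).image (origV d)) ∪
       ((Finset.Icc (max i1 iℓ) d).image (newV d))

/-!
The vertex `0` lies in none of the faces `F_i` and is none of the new vertices `v_i`, so coning
from `0` commutes with every stellar subdivision performed by `⋄`. Moreover `Γ_{I∖0}` is the cone
from `0` over `π(Γ_J)`, `J = (I∖0) - 1`, and `⋄` commutes with `π`: the first subdivision, at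
`F_0 = {1,…,d+1}`, does nothing to `π(Γ_J)`, since each facet of `Γ_J` misses some vertex
`j ≤ d - 1`, and the remaining ones are the `π`-images of the subdivisions in dimension `d - 1`.
Hence `⋄(Γ_{I∖0}) = 0 * π(⋄(Γ_J))`, while `⋄(Γ_0)` contains `π(⋄(Γ_J))` and does not have `0`
as a vertex; the three claims follow from these two facts.
-/

section StellarSubdivision

lemma joinC_union_right (A B C : Set (Finset W)) :
    joinC A (B ∪ C) = joinC A B ∪ joinC A C := by
  ext s
  simp only [joinC, Set.mem_ofPred_eq, Set.mem_union, or_and_right, exists_or, and_or_left]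

lemma joinC_left_comm (A B C : Set (Finset W)) :
    joinC A (joinC B C) = joinC B (joinC A C) := by
  have key : ∀ X Y Z : Set (Finset W), joinC X (joinC Y Z) ⊆ joinC Y (joinC X Z) := by
    rintro X Y Z s ⟨a, ha, t, ⟨b, hb, c, hc, rfl⟩, rfl⟩
    exact ⟨b, hb, a ∪ c, ⟨a, ha, c, hc, rfl⟩, Finset.union_left_comm a b c⟩
  exact (key A B C).antisymm (key B A C)

lemma subset_joinC_simplexOn (A : Finset W) (Δ : Set (Finset W)) :
    Δ ⊆ joinC (simplexOn A) Δ :=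
  fun G hG => ⟨∅, Finset.empty_subset A, G, hG, (Finset.empty_union G).symm⟩

lemma mem_of_mem_joinC_singleton {w : W} {Δ : Set (Finset W)} {G : Finset W}
    (hG : G ∈ joinC (simplexOn {w}) Δ) (hwG : w ∉ G) : G ∈ Δ := by
  obtain ⟨a, ha, b, hb, rfl⟩ := hG
  rcases Finset.subset_singleton_iff.1 ha with rfl | rfl
  · rwa [Finset.empty_union]
  · exact absurd (Finset.mem_union_left b (Finset.mem_singleton_self w)) hwG

def FreeOf {α : Type*} (w : α) (Δ : Set (Finset α)) : Prop := ∀ G ∈ Δ, w ∉ G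

lemma FreeOf.mono {α : Type*} {w : α} {Δ Γ : Set (Finset α)} (h : FreeOf w Γ) (hΔ : Δ ⊆ Γ) :
    FreeOf w Δ :=
  fun G hG => h G (hΔ hG)

lemma mem_joinC_singleton_iff {w : W} {Δ : Set (Finset W)} (h : FreeOf w Δ) {G : Finset W} :
    G ∈ joinC (simplexOn {w}) Δ ↔ G.erase w ∈ Δ := by
  constructor
  · rintro ⟨a, ha, b, hb, rfl⟩
    have hwb := h b hb
    rcases Finset.subset_singleton_iff.1 ha with rfl | rfl
    · rwa [Finset.empty_union, Finset.erase_eq_of_notMem hwb]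
    · rwa [← Finset.insert_eq, Finset.erase_insert hwb]
  · intro hG
    refine ⟨G ∩ {w}, Finset.inter_subset_right, G.erase w, hG, ?_⟩
    ext x
    by_cases hx : x = w <;> simp [hx]

lemma delFace_joinC_singleton {w : W} {F : Finset W} {Δ : Set (Finset W)} (hwF : w ∉ F)
    (h : FreeOf w Δ) :
    delFace (joinC (simplexOn {w}) Δ) F = joinC (simplexOn {w}) (delFace Δ F) := by
  ext G
  rw [mem_joinC_singleton_iff (h.mono fun _ hG => hG.1)]
  change G ∈ joinC _ Δ ∧ ¬ F ⊆ G ↔ G.erase w ∈ Δ ∧ ¬ F ⊆ G.erase w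
  rw [mem_joinC_singleton_iff h, Finset.subset_erase, and_iff_left hwF]

lemma lkC_joinC_singleton {w : W} {F : Finset W} {Δ : Set (Finset W)} (hwF : w ∉ F)
    (h : FreeOf w Δ) :
    lkC (joinC (simplexOn {w}) Δ) F = joinC (simplexOn {w}) (lkC Δ F) := by
  ext G
  rw [mem_joinC_singleton_iff fun G hG hwG => h _ hG.2 (Finset.mem_union_right F hwG)]
  change Disjoint F G ∧ F ∪ G ∈ joinC _ Δ ↔ Disjoint F (G.erase w) ∧ F ∪ G.erase w ∈ Δ
  rw [mem_joinC_singleton_iff h, Finset.erase_union_distrib, Finset.erase_eq_of_notMem hwF,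
    ← Finset.disjoint_erase_comm, Finset.erase_eq_of_notMem hwF]

lemma sdC_joinC_singleton {w v : W} {F : Finset W} {Δ : Set (Finset W)} (hwF : w ∉ F)
    (h : FreeOf w Δ) :
    sdC v F (joinC (simplexOn {w}) Δ) = joinC (simplexOn {w}) (sdC v F Δ) := by
  rw [sdC, sdC, delFace_joinC_singleton hwF h, lkC_joinC_singleton hwF h,
    joinC_left_comm (bdrySimplex F), joinC_left_comm (simplexOn {v}), ← joinC_union_right]

lemma sdC_union (v : W) (F : Finset W) (Δ Γ : Set (Finset W)) :
    sdC v F (Δ ∪ Γ) = sdC v F Δ ∪ sdC v F Γ := by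
  have hdel : delFace (Δ ∪ Γ) F = delFace Δ F ∪ delFace Γ F := by
    ext G; exact or_and_right
  have hlk : lkC (Δ ∪ Γ) F = lkC Δ F ∪ lkC Γ F := by
    ext G; exact and_or_left
  rw [sdC, hdel, hlk, joinC_union_right, joinC_union_right, Set.union_union_union_comm]
  rfl

lemma sdC_mono (v : W) (F : Finset W) {Δ Γ : Set (Finset W)} (h : Δ ⊆ Γ) :
    sdC v F Δ ⊆ sdC v F Γ := by
  rintro s (⟨hs, hFs⟩ | ⟨a, ha, t, ⟨b, hb, c, ⟨hFc, hc⟩, rfl⟩, rfl⟩)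
  · exact Or.inl ⟨h hs, hFs⟩
  · exact Or.inr ⟨a, ha, b ∪ c, ⟨b, hb, c, ⟨hFc, h hc⟩, rfl⟩, rfl⟩

lemma FreeOf.sdC {w v : W} (hwv : w ≠ v) {F : Finset W} {Δ : Set (Finset W)}
    (h : FreeOf w Δ) : FreeOf w (Paper.sdC v F Δ) := by
  rintro s (⟨hs, _⟩ | ⟨a, ha, t, ⟨b, hb, c, ⟨_, hc⟩, rfl⟩, rfl⟩) hws
  · exact h s hs hws
  · have hwFc : w ∉ F ∪ c := h _ hc
    simp only [Finset.mem_union] at hws hwFc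
    rcases hws with hwa | hwb | hwc
    · exact hwv (Finset.mem_singleton.1 (ha hwa))
    · exact hwFc (Or.inl (hb.1 hwb))
    · exact hwFc (Or.inr hwc)

lemma sdC_eq_self {v : W} {F : Finset W} {Δ : Set (Finset W)} (h : ∀ G ∈ Δ, ¬ F ⊆ G) :
    sdC v F Δ = Δ := by
  refine Set.Subset.antisymm ?_ fun G hG => Or.inl ⟨hG, h G hG⟩
  rintro s (⟨hs, _⟩ | ⟨a, -, t, ⟨b, -, c, ⟨-, hc⟩, rfl⟩, rfl⟩)
  · exact hs
  · exact absurd Finset.subset_union_left (h _ hc)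

def sdSeq (v : ℕ → W) (F : ℕ → Finset W) (L : List ℕ) (Δ : Set (Finset W)) : Set (Finset W) :=
  L.foldl (fun Γ i => sdC (v i) (F i) Γ) Δ

lemma sdSeq_cons (v : ℕ → W) (F : ℕ → Finset W) (i : ℕ) (L : List ℕ) (Δ : Set (Finset W)) :
    sdSeq v F (i :: L) Δ = sdSeq v F L (sdC (v i) (F i) Δ) := rfl

lemma sdSeq_map (v : ℕ → W) (F : ℕ → Finset W) (s : ℕ → ℕ) (L : List ℕ)
    (Δ : Set (Finset W)) : sdSeq v F (L.map s) Δ = sdSeq (v ∘ s) (F ∘ s) L Δ :=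
  List.foldl_map ..

lemma sdSeq_union (v : ℕ → W) (F : ℕ → Finset W) (L : List ℕ) (Δ Γ : Set (Finset W)) :
    sdSeq v F L (Δ ∪ Γ) = sdSeq v F L Δ ∪ sdSeq v F L Γ := by
  induction L generalizing Δ Γ with
  | nil => rfl
  | cons i L ih => rw [sdSeq_cons, sdC_union, ih]; rfl

lemma sdSeq_mono (v : ℕ → W) (F : ℕ → Finset W) (L : List ℕ) {Δ Γ : Set (Finset W)}
    (h : Δ ⊆ Γ) : sdSeq v F L Δ ⊆ sdSeq v F L Γ := by
  induction L generalizing Δ Γ with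
  | nil => exact h
  | cons i L ih => exact ih (sdC_mono _ _ h)

lemma FreeOf.sdSeq {w : W} {v : ℕ → W} (hwv : ∀ i, w ≠ v i) (F : ℕ → Finset W) (L : List ℕ)
    {Δ : Set (Finset W)} (h : FreeOf w Δ) : FreeOf w (Paper.sdSeq v F L Δ) := by
  induction L generalizing Δ with
  | nil => exact h
  | cons i L ih => exact ih (h.sdC (hwv i))

lemma sdSeq_joinC_singleton {w : W} (v : ℕ → W) {F : ℕ → Finset W} (hwv : ∀ i, w ≠ v i)
    (hwF : ∀ i, w ∉ F i) (L : List ℕ) {Δ : Set (Finset W)} (h : FreeOf w Δ) :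
    sdSeq v F L (joinC (simplexOn {w}) Δ) = joinC (simplexOn {w}) (sdSeq v F L Δ) := by
  induction L generalizing Δ with
  | nil => rfl
  | cons i L ih => rw [sdSeq_cons, sdC_joinC_singleton (hwF i) h, ih (h.sdC (hwv i))]; rfl

end StellarSubdivision

section Relabeling

variable {α β : Type*} [DecidableEq β]

lemma mapC_union (f : α → β) (A B : Set (Finset α)) :
    mapC f (A ∪ B) = mapC f A ∪ mapC f B := by
  ext s
  simp only [mapC, Set.mem_ofPred_eq, Set.mem_union, or_and_right, exists_or]

lemma mapC_joinC [DecidableEq α] (f : α → β) (A B : Set (Finset α)) :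
    mapC f (joinC A B) = joinC (mapC f A) (mapC f B) := by
  ext s
  constructor
  · rintro ⟨G, ⟨a, ha, b, hb, rfl⟩, rfl⟩
    exact ⟨a.image f, ⟨a, ha, rfl⟩, b.image f, ⟨b, hb, rfl⟩, Finset.image_union a b⟩
  · rintro ⟨-, ⟨a, ha, rfl⟩, -, ⟨b, hb, rfl⟩, rfl⟩
    exact ⟨a ∪ b, ⟨a, ha, b, hb, rfl⟩, (Finset.image_union a b).symm⟩

lemma mapC_simplexOn (f : α → β) (A : Finset α) :
    mapC f (simplexOn A) = simplexOn (A.image f) := by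
  ext s
  constructor
  · rintro ⟨G, hG, rfl⟩
    exact Finset.image_subset_image hG
  · intro hs
    obtain ⟨G, hG, rfl⟩ := Finset.subset_image_iff.1 hs
    exact ⟨G, hG, rfl⟩

lemma mapC_bdrySimplex {f : α → β} (hf : Function.Injective f) (A : Finset α) :
    mapC f (bdrySimplex A) = bdrySimplex (A.image f) := by
  ext s
  constructor
  · rintro ⟨G, hG, rfl⟩
    exact Finset.image_ssubset_image hf |>.2 hG
  · intro hs
    obtain ⟨G, -, rfl⟩ := Finset.subset_image_iff.1 hs.subset
    exact ⟨G, (Finset.image_ssubset_image hf).1 hs, rfl⟩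

lemma mapC_delFace {f : α → β} (hf : Function.Injective f) (Δ : Set (Finset α)) (F : Finset α) :
    mapC f (delFace Δ F) = delFace (mapC f Δ) (F.image f) := by
  ext s
  constructor
  · rintro ⟨G, ⟨hG, hFG⟩, rfl⟩
    exact ⟨⟨G, hG, rfl⟩, fun h => hFG ((Finset.image_subset_image_iff hf).1 h)⟩
  · rintro ⟨⟨G, hG, rfl⟩, hFG⟩
    exact ⟨G, ⟨hG, fun h => hFG (Finset.image_subset_image h)⟩, rfl⟩

lemma mapC_lkC [DecidableEq α] {f : α → β} (hf : Function.Injective f) (Δ : Set (Finset α))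
    (F : Finset α) :
    mapC f (lkC Δ F) = lkC (mapC f Δ) (F.image f) := by
  ext s
  constructor
  · rintro ⟨G, ⟨hdis, hFG⟩, rfl⟩
    exact ⟨(Finset.disjoint_image hf).2 hdis, F ∪ G, hFG, (Finset.image_union F G).symm⟩
  · rintro ⟨hdis, H, hH, hFs⟩
    obtain ⟨G, -, rfl⟩ := Finset.subset_image_iff.1 (hFs ▸ Finset.subset_union_right)
    rw [← Finset.image_union, (Finset.image_injective hf).eq_iff] at hFs
    exact ⟨G, ⟨(Finset.disjoint_image hf).1 hdis, hFs ▸ hH⟩, rfl⟩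

lemma mapC_sdC [DecidableEq α] {f : α → β} (hf : Function.Injective f) (v : α) (F : Finset α)
    (Δ : Set (Finset α)) : mapC f (sdC v F Δ) = sdC (f v) (F.image f) (mapC f Δ) := by
  rw [sdC, sdC, mapC_union, mapC_delFace hf, mapC_joinC, mapC_joinC, mapC_simplexOn,
    mapC_bdrySimplex hf, mapC_lkC hf, Finset.image_singleton]

lemma mapC_sdSeq [DecidableEq α] {f : α → β} (hf : Function.Injective f) {v : ℕ → α} {v' : ℕ → β}
    {F : ℕ → Finset α} {F' : ℕ → Finset β} (L : List ℕ)
    (hv : ∀ i ∈ L, f (v i) = v' i) (hF : ∀ i ∈ L, (F i).image f = F' i) (Δ : Set (Finset α)) :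
    mapC f (sdSeq v F L Δ) = sdSeq v' F' L (mapC f Δ) := by
  induction L generalizing Δ with
  | nil => rfl
  | cons i L ih =>
    rw [sdSeq_cons, sdSeq_cons, ih (fun j hj => hv j (.tail i hj)) (fun j hj => hF j (.tail i hj)),
      mapC_sdC hf, hv i (.head L), hF i (.head L)]

end Relabeling

section Diamond

lemma Diam_eq_sdSeq (d : ℕ) (Δ : Set (Finset (V d))) :
    Diam d Δ = sdSeq (newV d) (Fsub d) (List.range (d+1)) Δ := rfl

lemma origV_eq_origV_iff (D : ℕ) {a b : ℕ} (ha : a ≤ D+1) (hb : b ≤ D+1) :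
    origV D a = origV D b ↔ a = b := by
  simp only [origV, Sum.inl.injEq, Fin.mk.injEq, Nat.mod_eq_of_lt (show a < D+2 by omega),
    Nat.mod_eq_of_lt (show b < D+2 by omega)]

lemma origV_ne_newV (D a b : ℕ) : origV D a ≠ newV D b := Sum.inl_ne_inr

lemma origV_zero_notMem_Fsub (D i : ℕ) : origV D 0 ∉ Fsub D i := by
  simp only [Fsub, Finset.mem_image, Finset.mem_Ioc, not_exists, not_and, and_imp]
  intro k hik hk hk0
  rw [origV_eq_origV_iff D hk (Nat.zero_le _)] at hk0
  omega

lemma piV_origV (d j : ℕ) (hj : j ≤ d + 1) : piV d (origV d j) = origV (d+1) (j+1) := by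
  simp only [piV, origV, Sum.map_inl, Sum.inl.injEq, Fin.ext_iff, Fin.val_succ,
    Nat.mod_eq_of_lt (show j < d+2 by omega), Nat.mod_eq_of_lt (show j + 1 < d+3 by omega)]

lemma piV_newV (d i : ℕ) (hi : i ≤ d) : piV d (newV d i) = newV (d+1) (i+1) := by
  simp only [piV, newV, Sum.map_inr, Sum.inr.injEq, Fin.ext_iff, Fin.val_succ,
    Nat.mod_eq_of_lt (show i < d+1 by omega), Nat.mod_eq_of_lt (show i + 1 < d+2 by omega)]

lemma piV_injective (d : ℕ) : Function.Injective (piV d) :=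
  Sum.map_injective.2 ⟨Fin.succ_injective _, Fin.succ_injective _⟩

lemma piV_ne_origV_zero (d : ℕ) (x : V d) : piV d x ≠ origV (d+1) 0 := by
  rcases x with j | j
  · simp only [piV, origV, Sum.map_inl, ne_eq, Sum.inl.injEq, Fin.ext_iff, Fin.val_succ,
      Nat.zero_mod]
    omega
  · exact Sum.inr_ne_inl

lemma image_piV_Fsub (d i : ℕ) :
    (Fsub d i).image (piV d) = Fsub (d+1) (i+1) := by
  rw [Fsub, Fsub, Finset.image_image]
  ext x
  simp only [Finset.mem_image, Finset.mem_Ioc, Function.comp_apply]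
  constructor
  · rintro ⟨j, ⟨hij, hj⟩, rfl⟩
    exact ⟨j+1, ⟨by omega, by omega⟩, (piV_origV d j hj).symm⟩
  · rintro ⟨k, ⟨hik, hk⟩, rfl⟩
    refine ⟨k-1, ⟨by omega, by omega⟩, ?_⟩
    rw [piV_origV d (k-1) (by omega), Nat.sub_add_cancel (by omega)]

lemma Gface_succ (d i : ℕ) (hi : 1 ≤ i) :
    Gface (d+1) i = insert (origV (d+1) 0) ((Gface d (i-1)).image (piV d)) := by
  ext x
  simp only [Gface, Finset.mem_insert, Finset.mem_image, Finset.mem_filter, Finset.mem_range]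
  constructor
  · rintro ⟨k, ⟨hk, hki⟩, rfl⟩
    rcases Nat.eq_zero_or_pos k with rfl | hk0
    · exact Or.inl rfl
    · refine Or.inr ⟨origV d (k-1), ⟨k-1, ⟨by omega, by omega⟩, rfl⟩, ?_⟩
      rw [piV_origV d (k-1) (by omega), Nat.sub_add_cancel hk0]
  · rintro (rfl | ⟨-, ⟨j, ⟨hj, hji⟩, rfl⟩, rfl⟩)
    · exact ⟨0, ⟨by omega, by omega⟩, rfl⟩
    · exact ⟨j+1, ⟨by omega, by omega⟩, (piV_origV d j (by omega)).symm⟩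

lemma GammaU_union (D : ℕ) (A B : Finset ℕ) :
    GammaU D (A ∪ B) = GammaU D A ∪ GammaU D B := by
  ext F
  simp only [GammaU, Set.mem_ofPred_eq, Set.mem_union, Finset.mem_union, or_and_right, exists_or]

lemma freeOf_origV_zero_GammaU_zero (D : ℕ) : FreeOf (origV D 0) (GammaU D {0}) := by
  rintro G ⟨i, hi, hG⟩ h0
  rw [Finset.mem_singleton.1 hi] at hG
  obtain ⟨k, hk, hk0⟩ := Finset.mem_image.1 (hG h0)
  rw [Finset.mem_filter, Finset.mem_range] at hk
  exact hk.2 ((origV_eq_origV_iff D (by omega) (Nat.zero_le _)).1 hk0)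

lemma freeOf_origV_zero_mapC_piV (d : ℕ) (X : Set (Finset (V d))) :
    FreeOf (origV (d+1) 0) (mapC (piV d) X) := by
  rintro - ⟨G, -, rfl⟩ h0
  obtain ⟨x, -, hx⟩ := Finset.mem_image.1 h0
  exact piV_ne_origV_zero d x hx

lemma mapC_piV_GammaU_subset (d : ℕ) (J : Finset ℕ) :
    mapC (piV d) (GammaU d J) ⊆ GammaU (d+1) {0} := by
  rintro - ⟨G, ⟨j, -, hG⟩, rfl⟩
  refine ⟨0, Finset.mem_singleton_self 0, fun x hx => ?_⟩
  obtain ⟨y, hy, rfl⟩ := Finset.mem_image.1 hx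
  obtain ⟨k, hk, rfl⟩ := Finset.mem_image.1 (hG hy)
  rw [Finset.mem_filter, Finset.mem_range] at hk
  rw [piV_origV d k (by omega)]
  exact Finset.mem_image_of_mem _ (Finset.mem_filter.2 ⟨Finset.mem_range.2 (by omega), by omega⟩)

lemma not_Fsub_zero_subset_image_piV (d : ℕ) {J : Finset ℕ} (hJ : ∀ j ∈ J, j ≤ d) :
    ∀ G ∈ GammaU d J, ¬ Fsub (d+1) 0 ⊆ G.image (piV d) := by
  rintro G ⟨j, hj, hG⟩ hsub
  have hjd := hJ j hj
  have hmem : origV (d+1) (j+1) ∈ Fsub (d+1) 0 :=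
    Finset.mem_image_of_mem _ (Finset.mem_Ioc.2 ⟨by omega, by omega⟩)
  obtain ⟨y, hy, hyj⟩ := Finset.mem_image.1 (hsub hmem)
  obtain ⟨k, hk, rfl⟩ := Finset.mem_image.1 (hG hy)
  rw [Finset.mem_filter, Finset.mem_range] at hk
  rw [piV_origV d k (by omega), origV_eq_origV_iff _ (by omega) (by omega)] at hyj
  omega

lemma GammaU_eq_joinC (d : ℕ) {I : Finset ℕ} (h0 : 0 ∉ I) :
    GammaU (d+1) I =
      joinC (simplexOn {origV (d+1) 0}) (mapC (piV d) (GammaU d (I.image (· - 1)))) := by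
  ext F
  rw [mem_joinC_singleton_iff (freeOf_origV_zero_mapC_piV d _)]
  constructor
  · rintro ⟨i, hi, hF⟩
    have hi1 : 1 ≤ i := Nat.one_le_iff_ne_zero.2 fun h => h0 (h ▸ hi)
    rw [Gface_succ d i hi1, Finset.subset_insert_iff] at hF
    obtain ⟨G, hG, hGF⟩ := Finset.subset_image_iff.1 hF
    exact ⟨G, ⟨i-1, Finset.mem_image_of_mem _ hi, hG⟩, hGF.symm⟩
  · rintro ⟨G, ⟨j, hj, hG⟩, hFG⟩
    obtain ⟨i, hi, rfl⟩ := Finset.mem_image.1 hj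
    have hi1 : 1 ≤ i := Nat.one_le_iff_ne_zero.2 fun h => h0 (h ▸ hi)
    refine ⟨i, hi, ?_⟩
    rw [Gface_succ d i hi1, Finset.subset_insert_iff, hFG]
    exact Finset.image_subset_image hG

lemma Diam_mapC_piV (d : ℕ) (X : Set (Finset (V d)))
    (hX : ∀ G ∈ X, ¬ Fsub (d+1) 0 ⊆ G.image (piV d)) :
    Diam (d+1) (mapC (piV d) X) = mapC (piV d) (Diam d X) := by
  have hfix : sdC (newV (d+1) 0) (Fsub (d+1) 0) (mapC (piV d) X) = mapC (piV d) X :=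
    sdC_eq_self fun _ ⟨G, hG, hGF⟩ => hGF ▸ hX G hG
  have hrange : ∀ i ∈ List.range (d+1), i ≤ d :=
    fun i hi => Nat.lt_succ_iff.1 (List.mem_range.1 hi)
  rw [Diam_eq_sdSeq, Diam_eq_sdSeq, List.range_succ_eq_map, sdSeq_cons, hfix, sdSeq_map,
    mapC_sdSeq (piV_injective d) _ (fun i hi => piV_newV d i (hrange i hi))
      (fun i _ => image_piV_Fsub d i)]
  rfl

lemma forall_mem_image_pred_le {d : ℕ} {I : Finset ℕ} (hI : ∀ i ∈ I, i ≤ d+1) :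
    ∀ j ∈ I.image (· - 1), j ≤ d := by
  simp only [Finset.mem_image, forall_exists_index, and_imp, forall_apply_eq_imp_iff₂]
  intro i hi
  have := hI i hi
  omega

lemma DiamU_union (D : ℕ) (A B : Finset ℕ) :
    DiamU D (A ∪ B) = DiamU D A ∪ DiamU D B := by
  rw [DiamU, GammaU_union]
  exact sdSeq_union ..

lemma DiamU_eq_joinC (d : ℕ) {I : Finset ℕ} (h0 : 0 ∉ I) (hI : ∀ i ∈ I, i ≤ d+1) :
    DiamU (d+1) I =
      joinC (simplexOn {origV (d+1) 0}) (mapC (piV d) (DiamU d (I.image (· - 1)))) := by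
  rw [DiamU, GammaU_eq_joinC d h0, Diam_eq_sdSeq,
    sdSeq_joinC_singleton _ (fun i => origV_ne_newV _ 0 i) (origV_zero_notMem_Fsub _) _
      (freeOf_origV_zero_mapC_piV d _),
    ← Diam_eq_sdSeq, Diam_mapC_piV d _ (not_Fsub_zero_subset_image_piV d
      (forall_mem_image_pred_le hI)), DiamU]

lemma freeOf_origV_zero_DiamU_zero (D : ℕ) : FreeOf (origV D 0) (DiamU D {0}) :=
  (freeOf_origV_zero_GammaU_zero D).sdSeq (origV_ne_newV D 0) _ _

lemma mapC_piV_DiamU_subset (d : ℕ) {J : Finset ℕ} (hJ : ∀ j ∈ J, j ≤ d) :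
    mapC (piV d) (DiamU d J) ⊆ DiamU (d+1) {0} := by
  rw [DiamU, ← Diam_mapC_piV d _ (not_Fsub_zero_subset_image_piV d hJ)]
  exact sdSeq_mono _ _ _ (mapC_piV_GammaU_subset d J)

end Diamond

-- The paper's dimension `d` is `d + 1` here.
/-- (paper's dimension `d` rendered as `d+1`) decomposition of
`⋄(Γ_I)` when `0 ∈ I`. -/
theorem stmt13 (d : ℕ) (I : Finset ℕ) (hI : ∀ i ∈ I, i ≤ d+1) (h0 : 0 ∈ I) :
    DiamU (d+1) I = DiamU (d+1) (I.erase 0) ∪ DiamU (d+1) {0} ∧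
    DiamU (d+1) (I.erase 0) ∩ DiamU (d+1) {0} =
      mapC (piV d) (DiamU d ((I.erase 0).image (· - 1))) ∧
    IsInduced (DiamU (d+1) {0}) (DiamU (d+1) I) := by
  have hI' : ∀ i ∈ I.erase 0, i ≤ d+1 := fun i hi => hI i (Finset.mem_of_mem_erase hi)
  have hunion : DiamU (d+1) I = DiamU (d+1) (I.erase 0) ∪ DiamU (d+1) {0} := by
    rw [← DiamU_union, Finset.union_comm, ← Finset.insert_eq, Finset.insert_erase h0]
  have hcone := DiamU_eq_joinC d (Finset.notMem_erase 0 I) hI'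
  have hfree := freeOf_origV_zero_DiamU_zero (d+1)
  have hsub := mapC_piV_DiamU_subset d (forall_mem_image_pred_le hI')
  refine ⟨hunion, ?_, hunion ▸ Set.subset_union_right, fun F hF hvert => ?_⟩
  · rw [hcone]
    exact Set.Subset.antisymm (fun F hF => mem_of_mem_joinC_singleton hF.1 (hfree F hF.2))
      (fun F hF => ⟨subset_joinC_simplexOn _ _ hF, hsub hF⟩)
  · rw [hunion, hcone] at hF
    refine hF.elim (fun hF => hsub (mem_of_mem_joinC_singleton hF fun h0F => ?_)) id
    exact hfree _ (hvert _ h0F) (Finset.mem_singleton_self _)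

end Paper
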